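/- arXiv:1101.2288 — 3 statements merged into one kernel-verified Lean document; each statement's English description precedes it below -/
import Mathlib

section
/- Let K ≥ 0 be an integer and v : {0,…,K+1} → ℕ with v(k) ≥ 1 for all k. Define for each k ∈ {0,…,K} the reals α_k := v(k)·v(k+1)/(v(k)+v(k+1)−1) and β_k := min(v(k), v(k+1)), set α := (Σ_{k=0}^{K} α_k^{−1})^{−1}, β := (Σ_{k=0}^{K} β_k^{−1})^{−1}, and let L := {k ∈ {0,…,K} : min(v(k), v(k+1)) > 1} be nonempty. Then β − α ≤ α·β·Σ_{k∈L} 1/max(v(k), v(k+1)) ≤ α·β·|L| / (min_{k∈L} v(k)). -/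
private lemma abg_aux (m M : ℝ) (hm : 0 < m) (hM : 0 < M) :
    (m + M - 1) / (m * M) - m⁻¹ = (m - 1) / (m * M) := by
  field_simp
  ring


/-- Absolute bound gap:
`β − α ≤ α·β·Σ_{k∈L} 1/max(v k, v (k+1)) ≤ α·β·|L|/min_{k∈L} v k`. -/
theorem absolute_bound_gap (K : ℕ) (v : ℕ → ℕ) (hv : ∀ k ≤ K + 1, 1 ≤ v k)
    (α β : ℝ)
    (hα : α = (∑ k ∈ Finset.range (K + 1),
      (((v k : ℝ) * (v (k + 1) : ℝ)) / ((v k : ℝ) + (v (k + 1) : ℝ) - 1))⁻¹)⁻¹)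
    (hβ : β = (∑ k ∈ Finset.range (K + 1), ((min (v k) (v (k + 1)) : ℕ) : ℝ)⁻¹)⁻¹)
    (L : Finset ℕ)
    (hL : L = (Finset.range (K + 1)).filter (fun k => 1 < min (v k) (v (k + 1))))
    (hne : L.Nonempty) :
    β - α ≤ α * β * ∑ k ∈ L, 1 / ((max (v k) (v (k + 1)) : ℕ) : ℝ) ∧
    α * β * ∑ k ∈ L, 1 / ((max (v k) (v (k + 1)) : ℕ) : ℝ)
      ≤ α * β * (L.card : ℝ) / ((L.inf' hne v : ℕ) : ℝ) := by
  set A := ∑ k ∈ Finset.range (K + 1),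
      (((v k : ℝ) * (v (k + 1) : ℝ)) / ((v k : ℝ) + (v (k + 1) : ℝ) - 1))⁻¹ with hAdef
  set B := ∑ k ∈ Finset.range (K + 1), ((min (v k) (v (k + 1)) : ℕ) : ℝ)⁻¹ with hBdef
  set S := ∑ k ∈ L, 1 / ((max (v k) (v (k + 1)) : ℕ) : ℝ) with hSdef
  have hvk : ∀ k ∈ Finset.range (K + 1), (1 : ℝ) ≤ v k ∧ (1 : ℝ) ≤ v (k + 1) := by
    intro k hk
    rw [Finset.mem_range] at hk
    constructor
    · exact_mod_cast hv k (by omega)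
    · exact_mod_cast hv (k + 1) (by omega)
  have hApos : 0 < A := by
    apply Finset.sum_pos
    · intro k hk
      obtain ⟨hx, hy⟩ := hvk k hk
      have : (0:ℝ) < ((v k : ℝ) * (v (k + 1) : ℝ)) / ((v k : ℝ) + (v (k + 1) : ℝ) - 1) :=
        div_pos (by nlinarith) (by linarith)
      positivity
    · exact ⟨0, Finset.mem_range.mpr (by omega)⟩
  have hBpos : 0 < B := by
    apply Finset.sum_pos
    · intro k hk
      obtain ⟨hx, hy⟩ := hvk k hk
      have : (0:ℝ) < ((min (v k) (v (k + 1)) : ℕ) : ℝ) := by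
        push_cast [Nat.cast_min]
        exact lt_min (by linarith) (by linarith)
      positivity
    · exact ⟨0, Finset.mem_range.mpr (by omega)⟩
  have hαpos : 0 < α := by rw [hα]; exact inv_pos.mpr hApos
  have hβpos : 0 < β := by rw [hβ]; exact inv_pos.mpr hBpos
  have hAB : A - B ≤ S := by
    have hSalt : S = ∑ k ∈ Finset.range (K + 1),
        (if 1 < min (v k) (v (k + 1)) then 1 / ((max (v k) (v (k + 1)) : ℕ) : ℝ) else 0) := by
      rw [hSdef, hL, Finset.sum_filter]
    rw [hSalt, ← Finset.sum_sub_distrib]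
    apply Finset.sum_le_sum
    intro k hk
    obtain ⟨hx, hy⟩ := hvk k hk
    set x := (v k : ℝ)
    set y := (v (k + 1) : ℝ)
    have hm : ((min (v k) (v (k + 1)) : ℕ) : ℝ) = min x y := by push_cast; rfl
    have hM : ((max (v k) (v (k + 1)) : ℕ) : ℝ) = max x y := by push_cast; rfl
    have hmM : min x y * max x y = x * y := min_mul_max x y
    have hsum : min x y + max x y = x + y := min_add_max x y
    have hmin1 : (1:ℝ) ≤ min x y := le_min hx hy
    have hmax1 : (1:ℝ) ≤ max x y := le_max_of_le_left hx
    have hinv : (x * y / (x + y - 1))⁻¹ = (x + y - 1) / (x * y) := by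
      rw [inv_div]
    by_cases hc : 1 < min (v k) (v (k + 1))
    · simp only [hc, if_true]
      rw [hinv, hm, hM]
      have hmin1' : (1:ℝ) < min x y := by
        rw [show min x y = ((min (v k) (v (k+1)) : ℕ) : ℝ) from hm.symm]
        exact_mod_cast hc
      rw [← hmM, ← hsum]
      have h0m : (0:ℝ) < x ⊓ y := by linarith
      have h0M : (0:ℝ) < x ⊔ y := by linarith
      rw [abg_aux _ _ h0m h0M, div_le_div_iff₀ (by positivity) h0M]
      nlinarith
    · simp only [hc, if_false]
      have hmeq : min x y = 1 := by
        have : min (v k) (v (k + 1)) = 1 := by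
          have := hv k (by rw [Finset.mem_range] at hk; omega)
          have := hv (k + 1) (by rw [Finset.mem_range] at hk; omega)
          omega
        rw [← hm, this]; norm_num
      rw [hinv, hm, hmeq]
      have : x + y - 1 = max x y := by linarith [min_add_max x y, hmeq]
      rw [this, show x * y = max x y from by nlinarith [min_mul_max x y, hmeq]]
      rw [div_self (by positivity)]
      norm_num
  constructor
  · have hA' : A ≠ 0 := ne_of_gt hApos
    have hB' : B ≠ 0 := ne_of_gt hBpos
    have key : β - α = α * β * (A - B) := by
      rw [hα, hβ, mul_sub, mul_right_comm, inv_mul_cancel₀ hA', one_mul, mul_assoc,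
        inv_mul_cancel₀ hB', mul_one]
    rw [key]
    exact mul_le_mul_of_nonneg_left hAB (by positivity)
  · have hinf1 : (1:ℝ) ≤ ((L.inf' hne v : ℕ) : ℝ) := by
      have : 1 ≤ L.inf' hne v := by
        rw [Finset.le_inf'_iff]
        intro k hk
        rw [hL, Finset.mem_filter] at hk
        omega
      exact_mod_cast this
    have hSle : S ≤ (L.card : ℝ) * (((L.inf' hne v : ℕ) : ℝ))⁻¹ := by
      calc ∑ k ∈ L, 1 / ((max (v k) (v (k + 1)) : ℕ) : ℝ)
          ≤ ∑ k ∈ L, (((L.inf' hne v : ℕ) : ℝ))⁻¹ := by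
            apply Finset.sum_le_sum
            intro k hk
            rw [one_div]
            apply inv_anti₀ (by linarith)
            have h1 : L.inf' hne v ≤ v k := Finset.inf'_le v hk
            have h2 : v k ≤ max (v k) (v (k + 1)) := le_max_left _ _
            exact_mod_cast le_trans h1 h2
        _ = (L.card : ℝ) * (((L.inf' hne v : ℕ) : ℝ))⁻¹ := by
            rw [Finset.sum_const, nsmul_eq_mul]
    calc α * β * S ≤ α * β * ((L.card : ℝ) * (((L.inf' hne v : ℕ) : ℝ))⁻¹) :=
          mul_le_mul_of_nonneg_left hSle (by positivity)
      _ = α * β * (L.card : ℝ) / ((L.inf' hne v : ℕ) : ℝ) := by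
          rw [div_eq_mul_inv]; ring
end

section
/- Let K ≥ 0 be an integer and v : {0,…,K+1} → ℕ with v(k) ≥ 1 for all k. Define for each k ∈ {0,…,K} the reals α_k := v(k)·v(k+1)/(v(k)+v(k+1)−1) and β_k := min(v(k), v(k+1)), and set α := (Σ_{k=0}^{K} α_k^{−1})^{−1}, β := (Σ_{k=0}^{K} β_k^{−1})^{−1}. Then α = β if and only if for every k ∈ {0,…,K}, v(k) = 1 or v(k+1) = 1. -/
/-!
Writing `m = min a b`, one has `(a + b - 1) / (a b) = 1 / m + (m - 1) / (a b)`, so each hop of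
the achievable bound exceeds the corresponding hop of the cut-set bound by the nonnegative amount
`(m - 1) / (a b)`, which vanishes exactly when one of the two layers has a single node. Hence the
two sums of reciprocals agree iff every hop has a single-node layer.
-/

lemma inv_mul_div_add_sub_one {a b : ℝ} (ha : a ≠ 0) (hb : b ≠ 0) :
    (a * b / (a + b - 1))⁻¹ = (min a b)⁻¹ + (min a b - 1) / (a * b) := by
  rw [inv_div]
  rcases le_total a b with h | h
  · rw [min_eq_left h]
    field_simp
    ring
  · rw [min_eq_right h]
    field_simp
    ring

section

variable {a b : ℕ} (ha : 1 ≤ a) (hb : 1 ≤ b)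
include ha hb

lemma inv_mul_div_add_sub_one_natCast :
    ((a : ℝ) * b / (a + b - 1))⁻¹ = ((min a b : ℕ) : ℝ)⁻¹ + ((min a b : ℕ) - 1) / (a * b) := by
  rw [Nat.cast_min]
  exact inv_mul_div_add_sub_one (by positivity) (by positivity)

lemma inv_min_le_inv_mul_div_add_sub_one :
    ((min a b : ℕ) : ℝ)⁻¹ ≤ ((a : ℝ) * b / (a + b - 1))⁻¹ := by
  rw [inv_mul_div_add_sub_one_natCast ha hb]
  have hmin : (1 : ℝ) ≤ (min a b : ℕ) := by exact_mod_cast le_min ha hb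
  exact le_add_of_nonneg_right (div_nonneg (sub_nonneg.2 hmin) (by positivity))

lemma inv_mul_div_add_sub_one_eq_inv_min_iff :
    ((a : ℝ) * b / (a + b - 1))⁻¹ = ((min a b : ℕ) : ℝ)⁻¹ ↔ a = 1 ∨ b = 1 := by
  have hab : (a : ℝ) * b ≠ 0 := by positivity
  rw [inv_mul_div_add_sub_one_natCast ha hb, add_eq_left, div_eq_zero_iff, or_iff_left hab,
    sub_eq_zero, Nat.cast_eq_one]
  omega

end

/-- Optimality condition (finite-node version): `α = β` iff for every hop `k`,
`v k = 1` or `v (k+1) = 1`. -/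
theorem optimality_condition (K : ℕ) (v : ℕ → ℕ) (hv : ∀ k ≤ K + 1, 1 ≤ v k)
    (α β : ℝ)
    (hα : α = (∑ k ∈ Finset.range (K + 1),
      (((v k : ℝ) * (v (k + 1) : ℝ)) / ((v k : ℝ) + (v (k + 1) : ℝ) - 1))⁻¹)⁻¹)
    (hβ : β = (∑ k ∈ Finset.range (K + 1), ((min (v k) (v (k + 1)) : ℕ) : ℝ)⁻¹)⁻¹) :
    α = β ↔ ∀ k ≤ K, v k = 1 ∨ v (k + 1) = 1 := by
  subst hα hβ
  have hhop : ∀ k ∈ Finset.range (K + 1), 1 ≤ v k ∧ 1 ≤ v (k + 1) := fun k hk => by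
    rw [Finset.mem_range] at hk
    exact ⟨hv k (by omega), hv (k + 1) (by omega)⟩
  rw [inv_inj, eq_comm, Finset.sum_eq_sum_iff_of_le fun k hk =>
    inv_min_le_inv_mul_div_add_sub_one (hhop k hk).1 (hhop k hk).2]
  simp only [Finset.mem_range, Nat.lt_succ_iff] at hhop ⊢
  refine forall₂_congr fun k hk => ?_
  rw [eq_comm, inv_mul_div_add_sub_one_eq_inv_min_iff (hhop k hk).1 (hhop k hk).2]
end

section
/- Let K ≥ 1 be an integer and v : {0,…,K+1} → ℕ with v(k) ≥ 1 for all k. Define α_k := v(k)·v(k+1)/(v(k)+v(k+1)−1) and β_k := min(v(k), v(k+1)) for k ∈ {0,…,K}, and α := (Σ_{k=0}^{K} α_k^{−1})^{−1}, β := (Σ_{k=0}^{K} β_k^{−1})^{−1}. Let L := {k ∈ {0,…,K} : min(v(k), v(k+1)) > 1} be nonempty. Then (β − α)/α = β·(α^{−1} − β^{−1}) and (β − α)/α ≤ |L| / ((v(1)^{−1} + v(K+1)^{−1}) · min_{k∈L} v(k)). -/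
/-! Per hop, `α_k⁻¹ - β_k⁻¹ = (min (v k) (v (k+1)) - 1) / (v k * v (k+1))`: this vanishes off `L`
and is below `(v k)⁻¹ ≤ (min_{L} v)⁻¹` on `L`, so `α⁻¹ - β⁻¹ ≤ |L| / min_{L} v`. Since `K ≥ 1`, the
first and last hops are distinct, whence `β⁻¹ ≥ v(1)⁻¹ + v(K+1)⁻¹`, and `(β - α)/α = β (α⁻¹ - β⁻¹)`
combines the two bounds. -/

open Finset

section OrderedField

variable {𝕜 : Type*} [Field 𝕜] [LinearOrder 𝕜] {a b : 𝕜}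

theorem inv_mul_div_sub_inv_min (ha : a ≠ 0) (hb : b ≠ 0) :
    (a * b / (a + b - 1))⁻¹ - (min a b)⁻¹ = (min a b - 1) / (a * b) := by
  rw [inv_div]
  rcases le_total a b with h | h
  · rw [min_eq_left h]; field_simp; ring
  · rw [min_eq_right h]; field_simp; ring

theorem min_sub_one_div_mul_le_inv [IsStrictOrderedRing 𝕜] (ha : 0 < a) (hb : 0 < b) :
    (min a b - 1) / (a * b) ≤ a⁻¹ := by
  rw [div_le_iff₀ (mul_pos ha hb), inv_mul_cancel_left₀ ha.ne']
  linarith [min_le_right a b]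

theorem min_sub_one_div_mul_nonneg [IsStrictOrderedRing 𝕜] (ha : 1 ≤ a) (hb : 1 ≤ b) :
    0 ≤ (min a b - 1) / (a * b) :=
  div_nonneg (sub_nonneg.2 (le_min ha hb)) (by positivity)

end OrderedField

section Layers

variable (v : ℕ → ℕ)

theorem sum_inv_mul_div_sub_sum_inv_min (n : ℕ) (hv : ∀ k ≤ n, 1 ≤ v k) :
    ∑ k ∈ range n, (((v k : ℝ) * v (k + 1)) / ((v k : ℝ) + v (k + 1) - 1))⁻¹ -
        ∑ k ∈ range n, ((min (v k) (v (k + 1)) : ℕ) : ℝ)⁻¹ =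
      ∑ k ∈ (range n).filter (fun k => 1 < min (v k) (v (k + 1))),
        ((min (v k) (v (k + 1)) : ℕ) - 1 : ℝ) / ((v k : ℝ) * v (k + 1)) := by
  rw [← sum_sub_distrib, sum_filter_of_ne]
  · refine sum_congr rfl fun k hk => ?_
    have hk : k < n := mem_range.1 hk
    rw [Nat.cast_min]
    exact inv_mul_div_sub_inv_min (Nat.cast_pos.2 (hv k hk.le)).ne'
      (Nat.cast_pos.2 (hv (k + 1) hk)).ne'
  · intro k hk hterm
    have hk : k < n := mem_range.1 hk
    by_contra h
    have hmin : min (v k) (v (k + 1)) = 1 := by have := hv k hk.le; have := hv (k + 1) hk; omega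
    simp [hmin] at hterm

theorem sum_min_sub_one_div_mul_le (s : Finset ℕ) (hs : s.Nonempty)
    (hv : ∀ k ∈ s, 1 < min (v k) (v (k + 1))) :
    ∑ k ∈ s, ((min (v k) (v (k + 1)) : ℕ) - 1 : ℝ) / ((v k : ℝ) * v (k + 1)) ≤
      s.card / (s.inf' hs v : ℕ) := by
  have hc : (0 : ℝ) < (s.inf' hs v : ℕ) := by
    obtain ⟨k, hk, hck⟩ := exists_mem_eq_inf' hs v
    rw [hck]; exact_mod_cast (lt_min_iff.1 (hv k hk)).1.trans' one_pos
  rw [div_eq_mul_inv, ← nsmul_eq_mul]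
  refine sum_le_card_nsmul _ _ _ fun k hk => ?_
  obtain ⟨hk0, hk1⟩ := lt_min_iff.1 (hv k hk)
  rw [Nat.cast_min]
  calc _ ≤ (v k : ℝ)⁻¹ := min_sub_one_div_mul_le_inv (by positivity) (by positivity)
    _ ≤ _ := inv_anti₀ hc (by exact_mod_cast inf'_le v hk)

theorem sum_min_sub_one_div_mul_nonneg (s : Finset ℕ) (hv : ∀ k ∈ s, 1 < min (v k) (v (k + 1))) :
    0 ≤ ∑ k ∈ s, ((min (v k) (v (k + 1)) : ℕ) - 1 : ℝ) / ((v k : ℝ) * v (k + 1)) :=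
  sum_nonneg fun k hk => by
    obtain ⟨hk0, hk1⟩ := lt_min_iff.1 (hv k hk)
    rw [Nat.cast_min]
    exact min_sub_one_div_mul_nonneg (by exact_mod_cast hk0.le) (by exact_mod_cast hk1.le)

theorem inv_add_inv_le_sum_inv_min {K : ℕ} (hK : 1 ≤ K) (hv : ∀ k ≤ K + 1, 1 ≤ v k) :
    (v 1 : ℝ)⁻¹ + (v (K + 1) : ℝ)⁻¹ ≤ ∑ k ∈ range (K + 1), ((min (v k) (v (k + 1)) : ℕ) : ℝ)⁻¹ := by
  have hmin : ∀ k ≤ K, ((v (k + 1) : ℝ))⁻¹ ≤ ((min (v k) (v (k + 1)) : ℕ) : ℝ)⁻¹ := fun k hk =>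
    inv_anti₀ (by exact_mod_cast le_min (hv k (by omega)) (hv (k + 1) (by omega)))
      (by exact_mod_cast min_le_right _ _)
  calc _ ≤ ((min (v 0) (v 1) : ℕ) : ℝ)⁻¹ + ((min (v K) (v (K + 1)) : ℕ) : ℝ)⁻¹ :=
        add_le_add (hmin 0 (by omega)) (hmin K le_rfl)
    _ ≤ _ := add_le_sum (f := fun k => ((min (v k) (v (k + 1)) : ℕ) : ℝ)⁻¹)
        (fun k _ => by positivity) (mem_range.2 (by omega)) (mem_range.2 (by omega)) (by omega)

end Layers

/-- Fractional gap: `(β − α)/α = β·(α⁻¹ − β⁻¹)` and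
`(β − α)/α ≤ |L| / ((v(1)⁻¹ + v(K+1)⁻¹) · min_{k∈L} v k)`. -/
theorem fractional_gap (K : ℕ) (hK : 1 ≤ K) (v : ℕ → ℕ) (hv : ∀ k ≤ K + 1, 1 ≤ v k)
    (α β : ℝ)
    (hα : α = (∑ k ∈ Finset.range (K + 1),
      (((v k : ℝ) * (v (k + 1) : ℝ)) / ((v k : ℝ) + (v (k + 1) : ℝ) - 1))⁻¹)⁻¹)
    (hβ : β = (∑ k ∈ Finset.range (K + 1), ((min (v k) (v (k + 1)) : ℕ) : ℝ)⁻¹)⁻¹)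
    (L : Finset ℕ)
    (hL : L = (Finset.range (K + 1)).filter (fun k => 1 < min (v k) (v (k + 1))))
    (hne : L.Nonempty) :
    (β - α) / α = β * (α⁻¹ - β⁻¹) ∧
    (β - α) / α ≤ (L.card : ℝ) /
      ((((v 1 : ℝ))⁻¹ + ((v (K + 1) : ℝ))⁻¹) * ((L.inf' hne v : ℕ) : ℝ)) := by
  subst hL
  have hmem : ∀ k ∈ (range (K + 1)).filter (fun k => 1 < min (v k) (v (k + 1))),
      1 < min (v k) (v (k + 1)) := fun k hk => (mem_filter.1 hk).2
  have hgap := sum_inv_mul_div_sub_sum_inv_min v (K + 1) hv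
  have hgap_le := sum_min_sub_one_div_mul_le v _ hne hmem
  have hgap_nonneg := sum_min_sub_one_div_mul_nonneg v _ hmem
  have hends := inv_add_inv_le_sum_inv_min v hK hv
  have hends_pos : 0 < (v 1 : ℝ)⁻¹ + (v (K + 1) : ℝ)⁻¹ := by
    have := hv 1 (by omega); have := hv (K + 1) le_rfl; positivity
  set S := ∑ k ∈ range (K + 1),
    (((v k : ℝ) * (v (k + 1) : ℝ)) / ((v k : ℝ) + (v (k + 1) : ℝ) - 1))⁻¹
  set T := ∑ k ∈ range (K + 1), ((min (v k) (v (k + 1)) : ℕ) : ℝ)⁻¹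
  have hT_pos : 0 < T := hends_pos.trans_le hends
  have hα_pos : 0 < α := hα ▸ inv_pos.2 (by linarith)
  have hβ_pos : 0 < β := hβ ▸ inv_pos.2 hT_pos
  have hratio : (β - α) / α = β * (α⁻¹ - β⁻¹) := by field_simp
  refine ⟨hratio, ?_⟩
  rw [hratio, hα, hβ, inv_inv, inv_inv, hgap]
  calc _ ≤ ((v 1 : ℝ)⁻¹ + (v (K + 1) : ℝ)⁻¹)⁻¹ * _ :=
        mul_le_mul (inv_anti₀ hends_pos hends) hgap_le hgap_nonneg (by positivity)
    _ = _ := by rw [inv_mul_eq_div, div_div, mul_comm]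
end
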